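/- Let G be a connected finite simple graph on the vertex set {1,…,n} with m edges and n ≥ 4. If G contains a cycle of length 3, i.e., there exist three pairwise adjacent vertices of G, then ara(J_G) ≤ m − 1. -/
import Mathlib


open MvPolynomial

noncomputable section

/-- `f_{pq} = x_p · x_{n+q} − x_q · x_{n+p}` in `K[x_1,…,x_{2n}]`, where the first `n`
variables are indexed by `Fin.castAdd n` and the last `n` variables by `Fin.natAdd n`. -/
def edgeBinomial (K : Type*) [Field K] (n : ℕ) (p q : Fin n) :
    MvPolynomial (Fin (n + n)) K :=
  X (Fin.castAdd n p) * X (Fin.natAdd n q) - X (Fin.castAdd n q) * X (Fin.natAdd n p)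

/-- The binomial edge ideal `J_G` of a graph `G` on the vertex set `{1,…,n}`. -/
def binomialEdgeIdeal (K : Type*) [Field K] {n : ℕ} (G : SimpleGraph (Fin n)) :
    Ideal (MvPolynomial (Fin (n + n)) K) :=
  Ideal.span {f | ∃ p q : Fin n, p < q ∧ G.Adj p q ∧ f = edgeBinomial K n p q}

/-- A binomial is a difference of two monomials. -/
def IsBinomial {K : Type*} [Field K] {m : ℕ} (f : MvPolynomial (Fin m) K) : Prop :=
  ∃ u v : Fin m →₀ ℕ, f = monomial u (1 : K) - monomial v 1

/-- The arithmetical rank: the smallest `s` such that there are `s` polynomials in `I`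
generating `I` up to radical. -/
def ara {K : Type*} [Field K] {m : ℕ} (I : Ideal (MvPolynomial (Fin m) K)) : ℕ :=
  sInf {s | ∃ F : Fin s → MvPolynomial (Fin m) K,
    (∀ i, F i ∈ I) ∧ (Ideal.span (Set.range F)).radical = I.radical}

/-- The binomial arithmetical rank: the smallest `s` such that there are `s` binomials in `I`
generating `I` up to radical. -/
def bar {K : Type*} [Field K] {m : ℕ} (I : Ideal (MvPolynomial (Fin m) K)) : ℕ :=
  sInf {s | ∃ B : Fin s → MvPolynomial (Fin m) K,
    (∀ i, IsBinomial (B i)) ∧ (∀ i, B i ∈ I) ∧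
    (Ideal.span (Set.range B)).radical = I.radical}

/-! ### Auxiliary lemmas -/

lemma edgeBinomial_swap (K : Type*) [Field K] (n : ℕ) (p q : Fin n) :
    edgeBinomial K n q p = - edgeBinomial K n p q := by
  simp only [edgeBinomial]; ring

lemma edgeBinomial_mem (K : Type*) [Field K] {n : ℕ} (G : SimpleGraph (Fin n))
    {p q : Fin n} (h : G.Adj p q) :
    edgeBinomial K n p q ∈ binomialEdgeIdeal K G := by
  rcases lt_trichotomy p q with h' | h' | h'
  · exact Ideal.subset_span ⟨p, q, h', h, rfl⟩
  · exact absurd h' h.ne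
  · rw [show edgeBinomial K n p q = - edgeBinomial K n q p from by simp only [edgeBinomial]; ring]
    exact neg_mem (Ideal.subset_span ⟨q, p, h', h.symm, rfl⟩)

/-- A symmetrized version of the edge binomial. -/
def sB (K : Type*) [Field K] (n : ℕ) : Sym2 (Fin n) → MvPolynomial (Fin (n + n)) K :=
  Sym2.lift ⟨fun p q => edgeBinomial K n (min p q) (max p q),
    fun p q => by simp [inf_comm, sup_comm]⟩

lemma sB_mk (K : Type*) [Field K] (n : ℕ) (p q : Fin n) :
    sB K n s(p, q) = edgeBinomial K n p q ∨ sB K n s(p, q) = - edgeBinomial K n p q := by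
  rcases le_total p q with h | h
  · left; simp [sB, min_eq_left h, max_eq_right h]
  · right
    simp only [sB, Sym2.lift_mk, min_eq_right h, max_eq_left h]
    exact edgeBinomial_swap K n p q

lemma sB_mem (K : Type*) [Field K] {n : ℕ} (G : SimpleGraph (Fin n)) [DecidableRel G.Adj]
    {e : Sym2 (Fin n)} (he : e ∈ G.edgeFinset) :
    sB K n e ∈ binomialEdgeIdeal K G := by
  induction e using Sym2.ind with
  | _ p q =>
    have hadj : G.Adj p q := by
      rwa [SimpleGraph.mem_edgeFinset, SimpleGraph.mem_edgeSet] at he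
    rcases sB_mk K n p q with h | h
    · rw [h]; exact edgeBinomial_mem K G hadj
    · rw [h]; exact neg_mem (edgeBinomial_mem K G hadj)

/-- Key Plücker-type identity. -/
lemma key_identity (K : Type*) [Field K] (n : ℕ) (a b c d : Fin n) :
    (edgeBinomial K n a d) ^ 2 =
      edgeBinomial K n a d * (edgeBinomial K n a d + edgeBinomial K n b c)
        - edgeBinomial K n b d * edgeBinomial K n a c
        + edgeBinomial K n c d * edgeBinomial K n a b := by
  simp only [edgeBinomial]; ring

lemma exists_boundary {n : ℕ} {G : SimpleGraph (Fin n)} (S : Set (Fin n))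
    {u w : Fin n} (p : G.Walk u w) : u ∈ S → w ∉ S →
    ∃ x ∈ S, ∃ y, y ∉ S ∧ G.Adj x y := by
  induction p with
  | nil => exact fun hu hw => absurd hu hw
  | @cons x y z hadj q ih =>
    intro hu hw
    by_cases hy : y ∈ S
    · exact ih hy hw
    · exact ⟨x, hu, y, hy, hadj⟩

lemma main_aux (K : Type*) [Field K] {n : ℕ} (G : SimpleGraph (Fin n)) [DecidableRel G.Adj]
    {a b c d : Fin n} (hab : G.Adj a b) (hac : G.Adj a c) (hbc : G.Adj b c)
    (had : G.Adj a d) (hdb : d ≠ b) (hdc : d ≠ c) :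
    ara (binomialEdgeIdeal K G) ≤ G.edgeFinset.card - 1 := by
  classical
  set J := binomialEdgeIdeal K G with hJ
  set E := G.edgeFinset with hE
  set m := E.card with hmdef
  have hda : d ≠ a := fun h => (h ▸ had).ne rfl
  have hba : b ≠ a := hab.ne'
  have hca : c ≠ a := hac.ne'
  have hcb : c ≠ b := hbc.ne'
  have he1 : s(a, d) ∈ E := SimpleGraph.mem_edgeFinset.mpr had
  have he2 : s(b, c) ∈ E := SimpleGraph.mem_edgeFinset.mpr hbc
  have hne : s(b, c) ≠ s(a, d) := by
    intro h
    rcases Sym2.eq_iff.mp h with ⟨h1, h2⟩ | ⟨h1, h2⟩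
    · exact hdc h2.symm
    · exact hdb h1.symm
  have hm2 : 2 ≤ m := Finset.one_lt_card.mpr ⟨s(a, d), he1, s(b, c), he2, hne.symm⟩
  set T : Finset (Sym2 (Fin n)) := (E.erase s(a, d)).erase s(b, c) with hT
  have hTcard : T.card = m - 2 := by
    rw [hT, Finset.card_erase_of_mem (Finset.mem_erase.mpr ⟨hne, he2⟩),
      Finset.card_erase_of_mem he1]
    omega
  set W : MvPolynomial (Fin (n + n)) K := edgeBinomial K n a d + edgeBinomial K n b c with hW
  set F : Fin (m - 1) → MvPolynomial (Fin (n + n)) K := fun i =>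
    if h : (i : ℕ) < T.card then sB K n ((T.equivFin.symm ⟨i, h⟩) : Sym2 (Fin n)) else W
    with hF
  have hWrange : W ∈ Set.range F := by
    refine ⟨⟨T.card, by omega⟩, ?_⟩
    simp [hF]
  have hErange : ∀ e ∈ T, sB K n e ∈ Set.range F := by
    intro e he
    set j := T.equivFin ⟨e, he⟩ with hj
    have hjlt : (j : ℕ) < T.card := j.isLt
    refine ⟨⟨j, by omega⟩, ?_⟩
    rw [hF]
    dsimp only
    rw [dif_pos hjlt]
    congr 1
    have : (⟨(j : ℕ), hjlt⟩ : Fin T.card) = j := rfl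
    rw [this, hj, Equiv.symm_apply_apply]
  have hTE : T ⊆ E := fun x hx => Finset.mem_of_mem_erase (Finset.mem_of_mem_erase hx)
  have hFJ : ∀ x ∈ Set.range F, x ∈ J := by
    rintro x ⟨i, rfl⟩
    rw [hF]
    dsimp only
    split_ifs with h
    · exact sB_mem K G (hTE (Finset.coe_mem _))
    · exact add_mem (edgeBinomial_mem K G had) (edgeBinomial_mem K G hbc)
  -- the two special generators are in the span of the range
  have habT : s(a, b) ∈ T := by
    rw [hT, Finset.mem_erase, Finset.mem_erase]
    refine ⟨?_, ?_, SimpleGraph.mem_edgeFinset.mpr hab⟩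
    · intro h
      rcases Sym2.eq_iff.mp h with ⟨h1, h2⟩ | ⟨h1, h2⟩
      · exact hab.ne h1
      · exact hac.ne h1
    · intro h
      rcases Sym2.eq_iff.mp h with ⟨h1, h2⟩ | ⟨h1, h2⟩
      · exact hdb h2.symm
      · exact hda h1.symm
  have hacT : s(a, c) ∈ T := by
    rw [hT, Finset.mem_erase, Finset.mem_erase]
    refine ⟨?_, ?_, SimpleGraph.mem_edgeFinset.mpr hac⟩
    · intro h
      rcases Sym2.eq_iff.mp h with ⟨h1, h2⟩ | ⟨h1, h2⟩
      · exact hab.ne h1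
      · exact hcb h2
    · intro h
      rcases Sym2.eq_iff.mp h with ⟨h1, h2⟩ | ⟨h1, h2⟩
      · exact hdc h2.symm
      · exact hda h1.symm
  set Sp := Ideal.span (Set.range F) with hSp
  have hmemSp : ∀ p q : Fin n, s(p, q) ∈ T → edgeBinomial K n p q ∈ Sp := by
    intro p q hpq
    rcases sB_mk K n p q with h | h
    · exact h ▸ Ideal.subset_span (hErange _ hpq)
    · have := Ideal.subset_span (hErange _ hpq)
      rw [h] at this
      simpa using neg_mem this
  have hWSp : W ∈ Sp := Ideal.subset_span hWrange
  have hadSq : (edgeBinomial K n a d) ^ 2 ∈ Sp := by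
    rw [key_identity K n a b c d]
    exact add_mem
      (sub_mem (Ideal.mul_mem_left _ _ hWSp) (Ideal.mul_mem_left _ _ (hmemSp a c hacT)))
      (Ideal.mul_mem_left _ _ (hmemSp a b habT))
  have hadRad : edgeBinomial K n a d ∈ Sp.radical := ⟨2, hadSq⟩
  have hbcRad : edgeBinomial K n b c ∈ Sp.radical := by
    have : edgeBinomial K n b c = W - edgeBinomial K n a d := by rw [hW]; ring
    rw [this]
    exact sub_mem (Ideal.le_radical hWSp) hadRad
  have hJle : J ≤ Sp.radical := by
    rw [hJ, binomialEdgeIdeal, Ideal.span_le]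
    rintro f ⟨p, q, _, hadj, rfl⟩
    by_cases hmem : s(p, q) ∈ T
    · exact Ideal.le_radical (hmemSp p q hmem)
    · have hpqE : s(p, q) ∈ E := SimpleGraph.mem_edgeFinset.mpr hadj
      have : s(p, q) = s(b, c) ∨ s(p, q) = s(a, d) := by
        rw [hT, Finset.mem_erase, Finset.mem_erase] at hmem
        tauto
      rcases this with h | h
      · rcases Sym2.eq_iff.mp h with ⟨rfl, rfl⟩ | ⟨rfl, rfl⟩
        · exact hbcRad
        · rw [edgeBinomial_swap]
          exact neg_mem hbcRad
      · rcases Sym2.eq_iff.mp h with ⟨rfl, rfl⟩ | ⟨rfl, rfl⟩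
        · exact hadRad
        · rw [edgeBinomial_swap]
          exact neg_mem hadRad
  have hradeq : Sp.radical = J.radical := by
    refine le_antisymm (Ideal.radical_mono (Ideal.span_le.mpr hFJ)) ?_
    calc J.radical ≤ Sp.radical.radical := Ideal.radical_mono hJle
    _ = Sp.radical := Ideal.radical_idem _
  exact Nat.sInf_le ⟨F, fun i => hFJ _ ⟨i, rfl⟩, hradeq⟩

theorem stmt_10 (K : Type*) [Field K] (n : ℕ) (hn : 4 ≤ n)
    (G : SimpleGraph (Fin n)) [DecidableRel G.Adj] (hconn : G.Connected)
    (m : ℕ) (hm : G.edgeFinset.card = m)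
    (htri : ∃ a b c : Fin n, G.Adj a b ∧ G.Adj b c ∧ G.Adj a c) :
    ara (binomialEdgeIdeal K G) ≤ m - 1 := by
  classical
  obtain ⟨a, b, c, hab, hbc, hac⟩ := htri
  set S : Set (Fin n) := {a, b, c} with hS
  have hexw : ∃ w : Fin n, w ∉ S := by
    by_contra hcon
    push_neg at hcon
    have : (Finset.univ : Finset (Fin n)).card ≤ ({a, b, c} : Finset (Fin n)).card := by
      apply Finset.card_le_card
      intro x _
      have := hcon x
      simp only [hS, Set.mem_insert_iff, Set.mem_singleton_iff] at this
      simp [this]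
    have h3 : ({a, b, c} : Finset (Fin n)).card ≤ 3 := by
      apply le_trans (Finset.card_insert_le _ _)
      have := Finset.card_insert_le b ({c} : Finset (Fin n))
      simp at this ⊢
      omega
    rw [Finset.card_univ, Fintype.card_fin] at this
    omega
  obtain ⟨w, hw⟩ := hexw
  obtain ⟨p⟩ := hconn.preconnected a w
  obtain ⟨u, hu, v, hv, huv⟩ := exists_boundary S p (by simp [hS]) hw
  have hva : v ≠ a := fun h => hv (h ▸ by simp [hS])
  have hvb : v ≠ b := fun h => hv (h ▸ by simp [hS])
  have hvc : v ≠ c := fun h => hv (h ▸ by simp [hS])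
  rw [← hm]
  simp only [hS, Set.mem_insert_iff, Set.mem_singleton_iff] at hu
  rcases hu with rfl | rfl | rfl
  · exact main_aux K G hab hac hbc huv hvb hvc
  · exact main_aux K G hab.symm hbc hac huv hva hvc
  · exact main_aux K G hac.symm hbc.symm hab huv hva hvb
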